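/- arXiv:math/0012216 — 3 statements merged into one kernel-verified Lean document; each statement's English description precedes it below -/
import Mathlib

section
/- With G, R, φ, δ, F_k as above, assume additionally that δ(g) ∈ R[1] for all g ∈ F₁. Then for x ∈ F_k and y ∈ F_l, δ([x,y]) ≡ δ(x)δ(y) − δ(y)δ(x) modulo R[k+l+1]. -/
/-- If moreover `δ(g) ∈ R[1]` for every `g ∈ F₁` (here `x ∈ F_k ⊆ F₁`, `y ∈ F_l ⊆ F₁`
with `k, l ≥ 1`), then for `x ∈ F_k` and `y ∈ F_l`:
`δ([x,y]) ≡ δ(x)δ(y) - δ(y)δ(x)` modulo `R[k+l+1]`. -/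
theorem delta_commutator_mod {G R : Type*} [Group G] [Ring R]
    (Rfil : ℕ → AddSubgroup R)
    (hdesc : ∀ k : ℕ, Rfil (k + 1) ≤ Rfil k)
    (hmul : ∀ k l : ℕ, ∀ x ∈ Rfil k, ∀ y ∈ Rfil l, x * y ∈ Rfil (k + l))
    (hleft : ∀ k : ℕ, ∀ r : R, ∀ x ∈ Rfil k, r * x ∈ Rfil k)
    (hright : ∀ k : ℕ, ∀ r : R, ∀ x ∈ Rfil k, x * r ∈ Rfil k)
    (φ : G →* Rˣ)
    (h1 : ∀ g : G, ((φ g : R) - 1) ∈ Rfil 1 → ((φ g : R) - 1) ∈ Rfil 1)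
    (k l : ℕ) (hk : 1 ≤ k) (hl : 1 ≤ l) (x y : G)
    (hx : ((φ x : R) - 1) ∈ Rfil k) (hy : ((φ y : R) - 1) ∈ Rfil l) :
    ((φ (x * y * x⁻¹ * y⁻¹) : R) - 1) -
        (((φ x : R) - 1) * ((φ y : R) - 1) - ((φ y : R) - 1) * ((φ x : R) - 1)) ∈
      Rfil (k + l + 1) := by
  have mono : ∀ m n : ℕ, m ≤ n → Rfil n ≤ Rfil m := by
    intro m n h
    induction h with
    | refl => exact le_rfl
    | step h ih => exact (hdesc _).trans ih
  set A : R := (φ x : R) with hA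
  set B : R := (φ y : R) with hB
  set A' : R := (((φ x)⁻¹ : Rˣ) : R) with hA'
  set B' : R := (((φ y)⁻¹ : Rˣ) : R) with hB'
  have hAA' : A * A' = 1 := by rw [hA, hA']; exact_mod_cast (φ x).mul_inv
  have hA'A : A' * A = 1 := by rw [hA, hA']; exact_mod_cast (φ x).inv_mul
  have hBB' : B * B' = 1 := by rw [hB, hB']; exact_mod_cast (φ y).mul_inv
  have hB'B : B' * B = 1 := by rw [hB, hB']; exact_mod_cast (φ y).inv_mul
  have hinvx : (A' - 1) ∈ Rfil k := by
    have : A' - 1 = -(A' * (A - 1)) := by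
      have : A' * (A - 1) = 1 - A' := by rw [mul_sub, hA'A, mul_one]
      rw [this]; noncomm_ring
    rw [this]
    exact neg_mem (hleft k A' _ hx)
  have hinvy : (B' - 1) ∈ Rfil l := by
    have : B' - 1 = -(B' * (B - 1)) := by
      have : B' * (B - 1) = 1 - B' := by rw [mul_sub, hB'B, mul_one]
      rw [this]; noncomm_ring
    rw [this]
    exact neg_mem (hleft l B' _ hy)
  have hc : ((A - 1) * (B - 1) - (B - 1) * (A - 1)) ∈ Rfil (k + l) := by
    refine sub_mem (hmul k l _ hx _ hy) ?_
    have := hmul l k _ hy _ hx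
    rwa [add_comm] at this
  have hw : (A' * B' - 1) ∈ Rfil 1 := by
    have : A' * B' - 1 = A' * (B' - 1) + (A' - 1) := by noncomm_ring
    rw [this]
    exact add_mem (hleft 1 A' _ (mono 1 l hl hinvy)) (mono 1 k hk hinvx)
  have hφ : ((φ (x * y * x⁻¹ * y⁻¹) : R)) = A * B * A' * B' := by
    rw [map_mul, map_mul, map_mul, map_inv, map_inv]
    push_cast
    rfl
  have key : ((φ (x * y * x⁻¹ * y⁻¹) : R) - 1) -
      ((A - 1) * (B - 1) - (B - 1) * (A - 1)) =
      ((A - 1) * (B - 1) - (B - 1) * (A - 1)) * (A' * B' - 1) := by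
    have hc1 : (A - 1) * (B - 1) - (B - 1) * (A - 1) = A * B - B * A := by noncomm_ring
    have e2 : B * A * (A' * B') = 1 := by
      rw [← mul_assoc, mul_assoc B A A', hAA', mul_one, hBB']
    rw [hφ, hc1, mul_sub, sub_mul, mul_one, ← mul_assoc (A * B) A' B', e2]
  rw [key]
  exact hmul (k + l) 1 _ hc _ hw
end

section
/- There exists an invertible integer matrix F ∈ GL(5, ℤ), namely F with rows (0,−1,0,0,0), (0,0,0,0,−1), (1,0,0,0,0), (0,0,1,1,−1), (0,0,0,1,0), such that P(ζ₁)·F = −F·Z₀ and P(ξ)·F = −F·X₀, where P(ζ₁) = Z(−1) and P(ξ) = X are the specializations at t = −1 of the Jones representation matrices, and Z₀, X₀ are the matrices of the actions of ζ₁ and ξ on Λ²H/ωℤ in the basis t₁,…,t₅. -/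
set_option maxRecDepth 10000

/-- `P(ζ₁) = Z(-1)`: the specialization at `t = -1` of the Jones matrix `Z`. -/
def Pzeta1 : Matrix (Fin 5) (Fin 5) ℤ :=
  !![-1, 0, 0, 0, -1;
     0, -1, 1, 0, 0;
     0, 0, -1, 0, 0;
     0, 0, 1, -1, 0;
     0, 0, 0, 0, -1]

/-- `P(ξ) = X`, the permutation matrix. -/
def Pxi : Matrix (Fin 5) (Fin 5) ℤ :=
  !![0, 0, 1, 0, 0;
     0, 0, 0, 0, 1;
     1, 0, 0, 0, 0;
     0, 1, 0, 0, 0;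
     0, 0, 0, 1, 0]

/-- The matrix `Z₀` of the action of `ζ₁` on `Λ²H/ωℤ` in the basis `t₁, …, t₅`. -/
def Zzero : Matrix (Fin 5) (Fin 5) ℤ :=
  !![1, 0, 0, 0, 0;
     0, 1, 0, -1, 0;
     0, 0, 1, 0, 0;
     0, 0, 0, 1, 0;
     1, 0, 0, 0, 1]

/-- The matrix `X₀` of the action of `ξ = ζ₁⋯ζ₅` on `Λ²H/ωℤ` in the basis `t₁, …, t₅`
(a symplectic matrix of order 6). -/
def Xzero : Matrix (Fin 5) (Fin 5) ℤ :=
  !![0, 1, 0, 0, 0;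
     1, 0, 0, 0, 0;
     0, 0, 1, 2, 0;
     0, 0, -1, -1, 1;
     0, 0, 0, 1, 0]

/-- The intertwiner `F`. -/
def Fmat : Matrix (Fin 5) (Fin 5) ℤ :=
  !![0, -1, 0, 0, 0;
     0, 0, 0, 0, -1;
     1, 0, 0, 0, 0;
     0, 0, 1, 1, -1;
     0, 0, 0, 1, 0]

/-- `F ∈ GL(5, ℤ)` and `P(ζ₁)·F = -F·Z₀`, `P(ξ)·F = -F·X₀`: the specialization of the
Jones representation at `t = -1` is equivalent to `(Λ²H/ωℤ) ⊗ sgn`. -/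
theorem t_minus_one_specialization :
    IsUnit Fmat ∧ (Fmat.det = 1 ∨ Fmat.det = -1) ∧
    Pzeta1 * Fmat = -(Fmat * Zzero) ∧ Pxi * Fmat = -(Fmat * Xzero) := by
  have hdet : Fmat.det = 1 := by decide
  refine ⟨?_, Or.inl hdet, ?_, ?_⟩
  · rw [Matrix.isUnit_iff_isUnit_det, hdet]
    exact isUnit_one
  · decide
  · decide
end

section
/- In the expansion t = −e^h, the Taylor expansion of the matrix ρ(ψ₀) = t⁶·Id + ((t¹⁵+1)/t²⁴)·M (with M as given) has degree-1 coefficient equal to F·diag(6, 6, −24, 6, 6)·F⁻¹, where F is the explicit integer matrix with rows (0,−1,0,0,0), (0,0,0,0,−1), (1,0,0,0,0), (0,0,1,1,−1), (0,0,0,1,0). Equivalently, the coefficient of h in ρ(ψ₀)|_{t=−e^h} equals that conjugated diagonal matrix. -/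
/-- The substitution `t = -e^h` as a power series in `ℚ[[h]]`. -/
noncomputable def tExp : PowerSeries ℚ := -(PowerSeries.exp ℚ)

/-- `ρ(ψ₀)` after the substitution `t = -e^h`:
`t⁶·Id + ((t¹⁵+1)/t²⁴)·M` with `M` zero except in the fourth row. -/
noncomputable def rhoPsi0Exp : Matrix (Fin 5) (Fin 5) (PowerSeries ℚ) :=
  tExp ^ 6 • (1 : Matrix (Fin 5) (Fin 5) (PowerSeries ℚ)) +
    ((tExp ^ 15 + 1) * tExp⁻¹ ^ 24) •
      !![0, 0, 0, 0, 0;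
         0, 0, 0, 0, 0;
         0, 0, 0, 0, 0;
         tExp ^ 10 - 1, -tExp ^ 10 + tExp ^ 5, tExp ^ 10 - 1,
           -tExp ^ 15 + 1, -tExp ^ 10 + tExp ^ 5;
         0, 0, 0, 0, 0]

/-- The matrix `F`. -/
def FmatQ : Matrix (Fin 5) (Fin 5) ℚ :=
  !![0, -1, 0, 0, 0;
     0, 0, 0, 0, -1;
     1, 0, 0, 0, 0;
     0, 0, 1, 1, -1;
     0, 0, 0, 1, 0]

/-!
Only the 1-jet of `t = -e^h = -1 - h + O(h²)` matters: the `h`-coefficient of a product, power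
or inverse of power series is determined by the constant and linear coefficients of the factors.
Since `(t¹⁵+1)/t²⁴` vanishes at `t = -1` with `h`-coefficient `-15`, the `h`-coefficient of
`ρ(ψ₀)` is `6·Id - 15·M(-1)`, and the columns of `F` are eigenvectors of this matrix with
eigenvalues `6, 6, -24, 6, 6`.
-/

open PowerSeries

lemma PowerSeries.coeff_one_inv {k : Type*} [Field k] (φ : k⟦X⟧) :
    coeff 1 φ⁻¹ = -(constantCoeff φ)⁻¹ ^ 2 * coeff 1 φ := by
  by_cases h : constantCoeff φ = 0
  · simp [inv_eq_zero.mpr h, h]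
  · have h₁ := congrArg (coeff 1) (PowerSeries.mul_inv_cancel φ h)
    rw [coeff_one_mul, constantCoeff_inv, coeff_one, if_neg one_ne_zero] at h₁
    field_simp at h₁ ⊢
    linear_combination h₁

lemma constantCoeff_tExp : constantCoeff tExp = -1 := by
  simp [tExp]

lemma coeff_one_tExp : coeff 1 tExp = -1 := by
  simp [tExp]

def delta1Psi0 : Matrix (Fin 5) (Fin 5) ℚ :=
  !![6, 0, 0, 0, 0;
     0, 6, 0, 0, 0;
     0, 0, 6, 0, 0;
     0, 30, 0, -24, 30;
     0, 0, 0, 0, 6]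

lemma coeff_one_rhoPsi0Exp :
    (Matrix.of fun i j : Fin 5 => coeff 1 (rhoPsi0Exp i j)) = delta1Psi0 := by
  ext i j
  fin_cases i <;> fin_cases j <;>
    norm_num [rhoPsi0Exp, delta1Psi0, Matrix.one_apply, coeff_one_mul, coeff_one_pow,
      coeff_one_inv, constantCoeff_tExp, coeff_one_tExp]

lemma isUnit_det_FmatQ : IsUnit FmatQ.det := by
  refine Matrix.isUnit_det_of_right_inverse (B :=
    !![0, 0, 1, 0, 0;
       -1, 0, 0, 0, 0;
       0, -1, 0, 1, -1;
       0, 0, 0, 0, 1;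
       0, -1, 0, 0, 0]) ?_
  ext i j
  fin_cases i <;> fin_cases j <;> simp [FmatQ, Matrix.mul_apply, Fin.sum_univ_five]

lemma FmatQ_mul_diagonal :
    FmatQ * Matrix.diagonal ![6, 6, -24, 6, 6] = delta1Psi0 * FmatQ := by
  ext i j
  fin_cases i <;> fin_cases j <;>
    simp [FmatQ, delta1Psi0, Matrix.mul_apply, Fin.sum_univ_five] <;> norm_num

/-- The degree-1 coefficient of `ρ(ψ₀)|_{t = -e^h}` equals
`F · diag(6, 6, -24, 6, 6) · F⁻¹`. -/
theorem delta1_psi0 :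
    (Matrix.of fun i j : Fin 5 => PowerSeries.coeff 1 (rhoPsi0Exp i j)) =
      FmatQ * Matrix.diagonal ![6, 6, -24, 6, 6] * FmatQ⁻¹ := by
  rw [coeff_one_rhoPsi0Exp, FmatQ_mul_diagonal, Matrix.mul_assoc,
    Matrix.mul_nonsing_inv _ isUnit_det_FmatQ, Matrix.mul_one]
end
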